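/- For every n ≥ 1 there exists a set of n collinear points in ℝ² that is identified by ⌈(n+1)/2⌉ disks; specifically, the disks D_i meeting the point set exactly in the consecutive points x_i, …, x_{i+⌈n/2⌉} for i = 1, …, ⌈(n+1)/2⌉ form an identifying set. -/

import Mathlib

noncomputable section

/-- The Euclidean plane. -/
abbrev Pt : Type := EuclideanSpace ℝ (Fin 2)

/-- A disk: a closed Euclidean ball with nonnegative radius. -/
def IsDisk (D : Set Pt) : Prop :=
  ∃ (c : Pt) (r : ℝ), 0 ≤ r ∧ D = Metric.closedBall c r

/-- A family of disks identifies a finite point set: every point is covered and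
every pair of distinct points is separated by some disk. -/
def Identifies (𝒟 : Finset (Set Pt)) (P : Finset Pt) : Prop :=
  (∀ p ∈ P, ∃ D ∈ 𝒟, p ∈ D) ∧
  (∀ p ∈ P, ∀ q ∈ P, p ≠ q → ∃ D ∈ 𝒟, (p ∈ D ∧ q ∉ D) ∨ (q ∈ D ∧ p ∉ D))

/-- Minimum number of disks needed to identify `P`. -/
def gammaID (P : Finset Pt) : ℕ :=
  sInf {k | ∃ 𝒟 : Finset (Set Pt), 𝒟.card = k ∧ (∀ D ∈ 𝒟, IsDisk D) ∧ Identifies 𝒟 P}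

/-!
Place the points at `0, 1, …, n - 1` on a line and let `m = ⌊n / 2⌋`, so that `n ≤ 2m + 1`.
The disk with diameter `[i, i + m]` meets the line in that interval, and the `m + 1` intervals
`[i, i + m]`, `0 ≤ i ≤ m`, identify `{0, …, 2m}`: the point `a` lies in `[a - m, a]`, and for
`a < b` the interval starting at `b` (if `b ≤ m`) or the one ending at `max a m` (if `b > m`)
contains exactly one of them.
-/

def linePt (t : ℝ) : Pt := EuclideanSpace.single 0 t

lemma isometry_linePt : Isometry linePt :=
  Isometry.of_dist_eq fun s t => PiLp.dist_single_same 2 (fun _ => ℝ) 0 s t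

lemma linePt_eq_smul (t : ℝ) : linePt t = t • linePt 1 := by
  ext i
  fin_cases i <;> simp [linePt]

lemma collinear_range_linePt : Collinear ℝ (Set.range linePt) := by
  rw [collinear_iff_exists_forall_eq_smul_vadd]
  refine ⟨0, linePt 1, ?_⟩
  rintro - ⟨t, rfl⟩
  exact ⟨t, by rw [linePt_eq_smul, vadd_eq_add, add_zero]⟩

-- The disk with diameter the segment `[a, b]` of the line.
def lineDisk (a b : ℝ) : Set Pt :=
  Metric.closedBall (linePt ((a + b) / 2)) ((b - a) / 2)

lemma isDisk_lineDisk {a b : ℝ} (h : a ≤ b) : IsDisk (lineDisk a b) :=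
  ⟨_, _, by linarith, rfl⟩

lemma linePt_mem_lineDisk {a b t : ℝ} : linePt t ∈ lineDisk a b ↔ t ∈ Set.Icc a b := by
  rw [lineDisk, Metric.mem_closedBall, isometry_linePt.dist_eq, Real.dist_eq, abs_le,
    Set.mem_Icc]
  constructor <;> rintro ⟨h₁, h₂⟩ <;> constructor <;> linarith

lemma natCast_mem_lineDisk_add {i j m : ℕ} :
    linePt j ∈ lineDisk i ↑(i + m) ↔ j ∈ Set.Icc i (i + m) := by
  simp only [linePt_mem_lineDisk, Set.mem_Icc, Nat.cast_le]

lemma injective_lineDisk_add (m : ℕ) : Function.Injective fun i : ℕ => lineDisk i ↑(i + m) :=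
  fun i j (hij : lineDisk i ↑(i + m) = lineDisk j ↑(j + m)) => by
    have hi : linePt i ∈ lineDisk j ↑(j + m) :=
      hij ▸ natCast_mem_lineDisk_add.mpr (by simp)
    have hj : linePt j ∈ lineDisk i ↑(i + m) :=
      hij.symm ▸ natCast_mem_lineDisk_add.mpr (by simp)
    rw [natCast_mem_lineDisk_add, Set.mem_Icc] at hi hj
    omega

lemma identifies_image {α β : Type*} [DecidableEq β] [DecidableEq (Set Pt)]
    {S : Finset α} {I : Finset β} {f : α → Pt} {B : β → Set Pt} {U : β → Set α}
    (hU : ∀ a i, f a ∈ B i ↔ a ∈ U i)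
    (hcover : ∀ a ∈ S, ∃ i ∈ I, a ∈ U i)
    (hsep : ∀ a ∈ S, ∀ b ∈ S, a ≠ b → ∃ i ∈ I, (a ∈ U i ∧ b ∉ U i) ∨ (b ∈ U i ∧ a ∉ U i)) :
    Identifies (I.image B) (S.image f) := by
  simp only [Identifies, Finset.mem_image, exists_exists_and_eq_and]
  constructor
  · rintro - ⟨a, ha, rfl⟩
    simpa only [hU] using hcover a ha
  · rintro - ⟨a, ha, rfl⟩ - ⟨b, hb, rfl⟩ hab
    simpa only [hU] using hsep a ha b hb (ne_of_apply_ne f hab)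

lemma exists_mem_Icc_add {m a : ℕ} (ha : a ≤ 2 * m) : ∃ i ≤ m, a ∈ Set.Icc i (i + m) :=
  ⟨a - m, by omega, by simp only [Set.mem_Icc]; omega⟩

lemma exists_Icc_add_separating {m a b : ℕ} (hab : a ≠ b) (ha : a ≤ 2 * m) (hb : b ≤ 2 * m) :
    ∃ i ≤ m, a ∈ Set.Icc i (i + m) ∧ b ∉ Set.Icc i (i + m) ∨
      b ∈ Set.Icc i (i + m) ∧ a ∉ Set.Icc i (i + m) := by
  simp only [Set.mem_Icc]
  rcases hab.lt_or_gt with hab | hab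
  · rcases le_or_gt b m with hbm | hbm
    · exact ⟨b, hbm, Or.inr (by omega)⟩
    · exact ⟨a - m, by omega, Or.inl (by omega)⟩
  · rcases le_or_gt a m with ham | ham
    · exact ⟨a, ham, Or.inl (by omega)⟩
    · exact ⟨b - m, by omega, Or.inr (by omega)⟩

theorem exists_collinear_identified (n : ℕ) :
    ∃ P : Finset Pt, P.card = n ∧ Collinear ℝ (P : Set Pt) ∧
      ∃ 𝒟 : Finset (Set Pt), 𝒟.card = (n + 2) / 2 ∧
        (∀ D ∈ 𝒟, IsDisk D) ∧ Identifies 𝒟 P := by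
  classical
  set m := n / 2
  have hpts : ∀ a ∈ Finset.range n, a ≤ 2 * m := fun a ha => by
    rw [Finset.mem_range] at ha
    omega
  refine ⟨(Finset.range n).image fun j : ℕ => linePt j, ?_, ?_,
    (Finset.range (m + 1)).image fun i : ℕ => lineDisk i ↑(i + m), ?_, ?_, ?_⟩
  · rw [Finset.card_image_of_injective _
      fun a b h => Nat.cast_injective (isometry_linePt.injective h), Finset.card_range]
  · refine collinear_range_linePt.subset ?_
    rw [Finset.coe_image]
    rintro - ⟨j, -, rfl⟩
    exact ⟨j, rfl⟩
  · rw [Finset.card_image_of_injective _ (injective_lineDisk_add m), Finset.card_range]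
    omega
  · simp only [Finset.mem_image]
    rintro - ⟨i, -, rfl⟩
    exact isDisk_lineDisk (by simp)
  · refine identifies_image (fun _ _ => natCast_mem_lineDisk_add) (fun a ha => ?_)
      (fun a ha b hb hab => ?_)
    · obtain ⟨i, hi, h⟩ := exists_mem_Icc_add (hpts a ha)
      exact ⟨i, Finset.mem_range.mpr (by omega), h⟩
    · obtain ⟨i, hi, h⟩ := exists_Icc_add_separating hab (hpts a ha) (hpts b hb)
      exact ⟨i, Finset.mem_range.mpr (by omega), h⟩
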